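/- Let k be a field and R = k[x_1, x_2, x_3, …]. The operator D_∞ = ∂/∂x_1 + ∂²/(∂x_1 ∂x_2) + ∂³/(∂x_1 ∂x_2 ∂x_3) + ⋯ is a well-defined k-linear map R → R satisfying θ_{x_i}(θ_{x_i}(D_∞)) = 0 for every i (so D_∞ is an R-differential operator of x_i-order ≤ 1 for every i), but for every n ≥ 1, θ_{x_n}θ_{x_{n-1}}⋯θ_{x_1}(D_∞) ≠ 0; hence D_∞ is an R-differential operator that is not a quite R-differential operator. -/

import Mathlib

open MvPolynomial

/-- The commutator operator `θ_r(e) = r ∘ e − e ∘ r` on `K`-linear maps `U → V`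
between `R`-modules. -/
def theta (K R U V : Type) [CommRing K] [CommRing R] [AddCommGroup U] [AddCommGroup V]
    [Module K U] [Module K V] [Module R U] [Module R V]
    [SMulCommClass K R U] [SMulCommClass K R V]
    (r : R) (e : U →ₗ[K] V) : U →ₗ[K] V where
  toFun u := r • e u - e (r • u)
  map_add' u₁ u₂ := by
    simp only [map_add, smul_add]
    abel
  map_smul' c u := by
    simp only [RingHom.id_apply]
    rw [← smul_comm c r u]
    simp only [map_smul]
    rw [← smul_comm c r (e u), ← smul_sub]

/-- The ordinal-indexed filtration on `K`-linear maps `U → V` by the ordinal order of a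
differential operator: `F_0 = {e : θ_r e = 0 ∀ r}` and
`F_α = {e : θ_r e ∈ ⋃_{β<α} F_β ∀ r}`.  A quite differential operator is an element of
some `F_α`. -/
noncomputable def opFilt (K R U V : Type) [CommRing K] [CommRing R] [AddCommGroup U]
    [AddCommGroup V] [Module K U] [Module K V] [Module R U] [Module R V]
    [SMulCommClass K R U] [SMulCommClass K R V] : Ordinal.{0} → Set (U →ₗ[K] V) :=
  WellFounded.fix Ordinal.lt_wf (C := fun _ => Set (U →ₗ[K] V)) fun α F =>
    { e | ∀ r : R, theta K R U V r e = 0 ∨ ∃ β, ∃ h : β < α, theta K R U V r e ∈ F β h }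

/-- The `n`-th composition of partial derivatives `∂^n/(∂x_1 ∂x_2 ⋯ ∂x_n)` on
`k[x_1, x_2, x_3, …]`. -/
noncomputable def dchain (k : Type) [Field k] : ℕ → MvPolynomial ℕ+ k → MvPolynomial ℕ+ k
  | 0, f => f
  | n + 1, f => MvPolynomial.pderiv (⟨n + 1, Nat.succ_pos n⟩ : ℕ+) (dchain k n f)

/-- The iterated commutator `θ_{x_n} θ_{x_{n-1}} ⋯ θ_{x_1}(e)`. -/
noncomputable def tchain (k : Type) [Field k] :
    ℕ → (MvPolynomial ℕ+ k →ₗ[k] MvPolynomial ℕ+ k) →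
      (MvPolynomial ℕ+ k →ₗ[k] MvPolynomial ℕ+ k)
  | 0, e => e
  | n + 1, e => theta k (MvPolynomial ℕ+ k) (MvPolynomial ℕ+ k) (MvPolynomial ℕ+ k)
      (X (⟨n + 1, Nat.succ_pos n⟩ : ℕ+)) (tchain k n e)

/-!
Write `∂ⱼ = ∂/∂xⱼ` and `E_s = ∑_{n ≥ 0} ∂_{s+1} ⋯ ∂_{s+n}`, so that `D_∞ = E_0 - 1`; on a given
polynomial only finitely many terms of these sums are nonzero, and `θ_r` commutes with such sums.
Since `θ_r` is a derivation for composition and `θ_{xᵢ}(∂ⱼ) = -δᵢⱼ`, one gets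
`θ_{x_{s+1}} E_s = -E_{s+1}`, hence `θ_{x_n} ⋯ θ_{x_1} D_∞ = ±E_n`, which sends `1` to `±1`.
An element of the ordinal filtration admits no infinite chain of nonvanishing commutators, so
`D_∞` lies in no stage of it.

Each summand `∂_1 ⋯ ∂_n` contains `∂ᵢ` at most once, so `θ_{xᵢ}² D_∞ = 0`. Writing
`θ_r = L_r - R_r` with commuting left and right multiplications, `θ_{pq} = L_p θ_q + R_q θ_p`, so
the `r` for which `θ_r` is nilpotent on a fixed operator form a subalgebra; here it contains every
`xᵢ`, hence is everything.
-/

section Theta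

variable {K R U V W : Type} [CommRing K] [CommRing R] [AddCommGroup U] [AddCommGroup V]
  [AddCommGroup W] [Module K U] [Module K V] [Module K W] [Module R U] [Module R V] [Module R W]
  [SMulCommClass K R U] [SMulCommClass K R V] [SMulCommClass K R W]

local notation "θ" => theta K R

@[simp]
lemma theta_apply (r : R) (e : U →ₗ[K] V) (u : U) : θ U V r e u = r • e u - e (r • u) := rfl

lemma theta_zero (r : R) : θ U V r 0 = 0 := by
  ext u; simp

lemma theta_id (r : R) : θ U U r LinearMap.id = 0 := by
  ext u; simp

lemma theta_add (r : R) (e e' : U →ₗ[K] V) : θ U V r (e + e') = θ U V r e + θ U V r e' := by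
  ext u; simp; abel

lemma theta_neg (r : R) (e : U →ₗ[K] V) : θ U V r (-e) = -θ U V r e := by
  ext u; simp; abel

lemma theta_smul (r : R) (c : K) (e : U →ₗ[K] V) : θ U V r (c • e) = c • θ U V r e := by
  ext u
  simp [smul_sub, smul_comm c r]

lemma theta_comp (r : R) (A : V →ₗ[K] W) (B : U →ₗ[K] V) :
    θ U W r (A ∘ₗ B) = θ V W r A ∘ₗ B + A ∘ₗ θ U V r B := by
  ext u; simp

lemma opFilt_eq (β : Ordinal.{0}) :
    opFilt K R U V β =
      {e | ∀ r : R, θ U V r e = 0 ∨ ∃ γ < β, θ U V r e ∈ opFilt K R U V γ} := by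
  rw [opFilt, WellFounded.fix_eq]
  simp only [exists_prop]

lemma notMem_opFilt_of_theta_chain {e : ℕ → U →ₗ[K] V} {r : ℕ → R}
    (hstep : ∀ n, θ U V (r n) (e n) = e (n + 1)) (hne : ∀ n, e (n + 1) ≠ 0)
    (β : Ordinal.{0}) (n : ℕ) : e n ∉ opFilt K R U V β := by
  induction β using WellFoundedLT.induction generalizing n with
  | _ β ih =>
    intro he
    rw [opFilt_eq] at he
    rcases he (r n) with h | ⟨γ, hγ, h⟩
    · exact hne n (hstep n ▸ h)
    · exact ih γ hγ (n + 1) (hstep n ▸ h)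

end Theta

lemma Module.End.mem_maxGenEigenspace_zero {K M : Type} [CommRing K] [AddCommGroup M] [Module K M]
    (f : Module.End K M) (m : M) : m ∈ f.maxGenEigenspace 0 ↔ ∃ n, (f ^ n) m = 0 := by
  simp [Module.End.mem_maxGenEigenspace]

lemma Module.End.mul_mem_maxGenEigenspace_zero {K M : Type} [CommRing K] [AddCommGroup M]
    [Module K M] {f g : Module.End K M} (hfg : Commute f g) {m : M}
    (hm : m ∈ g.maxGenEigenspace 0) : m ∈ (f * g).maxGenEigenspace 0 := by
  rw [Module.End.mem_maxGenEigenspace_zero] at hm ⊢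
  obtain ⟨n, hn⟩ := hm
  exact ⟨n, by rw [hfg.mul_pow, Module.End.mul_apply, hn, map_zero]⟩

section ThetaNilpotent

variable (K : Type) {R : Type} (U V : Type) [CommRing K] [CommRing R] [Algebra K R] [AddCommGroup U]
  [AddCommGroup V] [Module K U] [Module K V]

section
variable [Module R V] [IsScalarTower K R V]

noncomputable def lsmulEnd (r : R) : Module.End K (U →ₗ[K] V) :=
  DistribSMul.toLinearMap K (U →ₗ[K] V) r

variable {K U V}

@[simp]
lemma lsmulEnd_apply (r : R) (e : U →ₗ[K] V) : lsmulEnd K U V r e = r • e := rfl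

lemma commute_lsmulEnd (p q : R) : Commute (lsmulEnd K U V p) (lsmulEnd K U V q) := by
  ext e u; simp [smul_smul, mul_comm]

end

section
variable [Module R U] [IsScalarTower K R U]

noncomputable def rsmulEnd (r : R) : Module.End K (U →ₗ[K] V) :=
  LinearMap.lcomp K V (DistribSMul.toLinearMap K U r)

variable {K U V}

@[simp]
lemma rsmulEnd_apply (r : R) (e : U →ₗ[K] V) (u : U) : rsmulEnd K U V r e u = e (r • u) := rfl

lemma commute_rsmulEnd (p q : R) : Commute (rsmulEnd K U V p) (rsmulEnd K U V q) := by
  ext e u; simp [smul_smul, mul_comm]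

end

variable [Module R U] [Module R V] [IsScalarTower K R U] [IsScalarTower K R V]

noncomputable def thetaEnd (r : R) : Module.End K (U →ₗ[K] V) :=
  lsmulEnd K U V r - rsmulEnd K U V r

variable {K U V}

lemma commute_lsmulEnd_rsmulEnd (p q : R) : Commute (lsmulEnd K U V p) (rsmulEnd K U V q) := by
  ext e u; simp

lemma commute_lsmulEnd_thetaEnd (p q : R) : Commute (lsmulEnd K U V p) (thetaEnd K U V q) :=
  (commute_lsmulEnd p q).sub_right (commute_lsmulEnd_rsmulEnd p q)

lemma commute_rsmulEnd_thetaEnd (p q : R) : Commute (rsmulEnd K U V p) (thetaEnd K U V q) :=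
  (commute_lsmulEnd_rsmulEnd q p).symm.sub_right (commute_rsmulEnd p q)

lemma commute_thetaEnd (p q : R) : Commute (thetaEnd K U V p) (thetaEnd K U V q) :=
  (commute_lsmulEnd_thetaEnd p q).sub_left (commute_rsmulEnd_thetaEnd p q)

lemma thetaEnd_add (p q : R) : thetaEnd K U V (p + q) = thetaEnd K U V p + thetaEnd K U V q := by
  ext e u; simp [thetaEnd, add_smul]; abel

lemma thetaEnd_mul (p q : R) :
    thetaEnd K U V (p * q) =
      lsmulEnd K U V p * thetaEnd K U V q + rsmulEnd K U V q * thetaEnd K U V p := by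
  ext e u; simp [thetaEnd, mul_smul, smul_sub]

lemma thetaEnd_algebraMap (c : K) : thetaEnd K U V (algebraMap K R c) = 0 := by
  ext e u; simp [thetaEnd]

lemma add_mem_maxGenEigenspace_thetaEnd {e : U →ₗ[K] V} {p q : R}
    (hp : e ∈ (thetaEnd K U V p).maxGenEigenspace 0)
    (hq : e ∈ (thetaEnd K U V q).maxGenEigenspace 0) :
    e ∈ (thetaEnd K U V (p + q)).maxGenEigenspace 0 := by
  have := Module.End.genEigenspace_inf_le_add (thetaEnd K U V p) (thetaEnd K U V q) 0 0 ⊤ ⊤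
    (commute_thetaEnd p q) (Submodule.mem_inf.2 ⟨hp, hq⟩)
  rwa [← thetaEnd_add, add_zero, top_add] at this

lemma mul_mem_maxGenEigenspace_thetaEnd {e : U →ₗ[K] V} {p q : R}
    (hp : e ∈ (thetaEnd K U V p).maxGenEigenspace 0)
    (hq : e ∈ (thetaEnd K U V q).maxGenEigenspace 0) :
    e ∈ (thetaEnd K U V (p * q)).maxGenEigenspace 0 := by
  have hcomm : Commute (lsmulEnd K U V p * thetaEnd K U V q)
      (rsmulEnd K U V q * thetaEnd K U V p) :=
    Commute.mul_left ((commute_lsmulEnd_rsmulEnd p q).mul_right (commute_lsmulEnd_thetaEnd p p))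
      (Commute.mul_right (commute_rsmulEnd_thetaEnd q q).symm (commute_thetaEnd q p))
  have := Module.End.genEigenspace_inf_le_add _ _ 0 0 ⊤ ⊤ hcomm (Submodule.mem_inf.2
    ⟨Module.End.mul_mem_maxGenEigenspace_zero (commute_lsmulEnd_thetaEnd p q) hq,
      Module.End.mul_mem_maxGenEigenspace_zero (commute_rsmulEnd_thetaEnd q p) hp⟩)
  rwa [← thetaEnd_mul, add_zero, top_add] at this

variable (R) in
noncomputable def thetaNilpotentSubalgebra (e : U →ₗ[K] V) : Subalgebra K R where
  carrier := {r | e ∈ (thetaEnd K U V r).maxGenEigenspace 0}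
  add_mem' := add_mem_maxGenEigenspace_thetaEnd
  mul_mem' := mul_mem_maxGenEigenspace_thetaEnd
  algebraMap_mem' c := by
    show e ∈ (thetaEnd K U V (algebraMap K R c)).maxGenEigenspace 0
    rw [thetaEnd_algebraMap, Module.End.mem_maxGenEigenspace_zero]
    exact ⟨1, rfl⟩

lemma mem_thetaNilpotentSubalgebra {e : U →ₗ[K] V} {r : R} :
    r ∈ thetaNilpotentSubalgebra R e ↔ ∃ n, (theta K R U V r)^[n] e = 0 := by
  have h := Module.End.mem_maxGenEigenspace_zero (thetaEnd K U V r) e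
  simp only [Module.End.pow_apply] at h
  exact h

lemma exists_iterate_theta_eq_zero {s : Set R} (hs : Algebra.adjoin K s = ⊤) {e : U →ₗ[K] V}
    (he : ∀ r ∈ s, ∃ n, (theta K R U V r)^[n] e = 0) (r : R) :
    ∃ n, (theta K R U V r)^[n] e = 0 := by
  have hle : Algebra.adjoin K s ≤ thetaNilpotentSubalgebra R e :=
    Algebra.adjoin_le fun r hr => mem_thetaNilpotentSubalgebra.2 (he r hr)
  exact mem_thetaNilpotentSubalgebra.1 (hle (hs ▸ Algebra.mem_top))

end ThetaNilpotent

lemma finsum_nat_eq_add_finsum_succ {M : Type} [AddCommMonoid M] {f : ℕ → M}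
    (hf : Function.HasFiniteSupport f) : ∑ᶠ n, f n = f 0 + ∑ᶠ n, f (n + 1) := by
  obtain ⟨N, hN⟩ := hf.bddAbove
  have h₀ : Function.support f ⊆ (Finset.range (N + 1) : Set ℕ) := fun n hn =>
    Finset.mem_range.2 (Nat.lt_succ_of_le (hN hn))
  have h₁ : Function.support (fun n => f (n + 1)) ⊆ (Finset.range N : Set ℕ) := fun n hn =>
    Finset.mem_range.2 (hN (show n + 1 ∈ Function.support f from hn))
  rw [finsum_eq_sum_of_support_subset f h₀, finsum_eq_sum_of_support_subset _ h₁,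
    Finset.sum_range_succ', add_comm]

section LocallyFiniteSum

variable {K U V : Type} [CommRing K] [AddCommGroup U] [AddCommGroup V] [Module K U] [Module K V]

def IsLocallyFiniteFamily (P : ℕ → U →ₗ[K] V) : Prop :=
  ∀ u, Function.HasFiniteSupport fun n => P n u

lemma IsLocallyFiniteFamily.comp_succ {P : ℕ → U →ₗ[K] V} (hP : IsLocallyFiniteFamily P) :
    IsLocallyFiniteFamily fun n => P (n + 1) :=
  fun u => (hP u).comp_of_injective Nat.succ_injective

noncomputable def locallyFiniteSum (P : ℕ → U →ₗ[K] V) (hP : IsLocallyFiniteFamily P) :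
    U →ₗ[K] V where
  toFun u := ∑ᶠ n, P n u
  map_add' u v := by simp only [map_add]; exact finsum_add_distrib (hP u) (hP v)
  map_smul' c u := by simp only [map_smul, RingHom.id_apply]; exact (smul_finsum' c (hP u)).symm

lemma locallyFiniteSum_apply (P : ℕ → U →ₗ[K] V) (hP : IsLocallyFiniteFamily P) (u : U) :
    locallyFiniteSum P hP u = ∑ᶠ n, P n u := rfl

lemma locallyFiniteSum_eq_add (P : ℕ → U →ₗ[K] V) (hP : IsLocallyFiniteFamily P) :
    locallyFiniteSum P hP = P 0 + locallyFiniteSum (fun n => P (n + 1)) hP.comp_succ := by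
  ext u
  exact finsum_nat_eq_add_finsum_succ (hP u)

variable {R : Type} [CommRing R] [Module R U] [Module R V] [SMulCommClass K R U]
  [SMulCommClass K R V]

lemma IsLocallyFiniteFamily.theta {P : ℕ → U →ₗ[K] V} (hP : IsLocallyFiniteFamily P) (r : R) :
    IsLocallyFiniteFamily fun n => theta K R U V r (P n) :=
  fun u => ((hP u).fun_comp (smul_zero r)).sub (hP (r • u))

lemma theta_locallyFiniteSum (r : R) (P : ℕ → U →ₗ[K] V) (hP : IsLocallyFiniteFamily P) :
    theta K R U V r (locallyFiniteSum P hP) =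
      locallyFiniteSum (fun n => theta K R U V r (P n)) (hP.theta r) := by
  ext u
  simp only [theta_apply, locallyFiniteSum_apply]
  rw [smul_finsum' r (hP u), ← finsum_sub_distrib ((hP u).fun_comp (smul_zero r)) (hP (r • u))]

end LocallyFiniteSum

namespace MvPolynomial

variable {σ R : Type} [CommRing R]

lemma pderiv_pderiv_comm (i j : σ) (f : MvPolynomial σ R) :
    pderiv i (pderiv j f) = pderiv j (pderiv i f) := by
  have h : ⁅pderiv i, pderiv j⁆ = (0 : Derivation R (MvPolynomial σ R) (MvPolynomial σ R)) :=
    derivation_ext fun l => by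
      classical
      rw [Derivation.commutator_apply]
      simp [pderiv_X, Pi.single_apply, apply_ite]
  have := congr($h f)
  rwa [Derivation.commutator_apply, Derivation.zero_apply, sub_eq_zero] at this

local notation "θ" => theta R (MvPolynomial σ R) (MvPolynomial σ R) (MvPolynomial σ R)

lemma theta_X_pderiv_self (i : σ) : θ (X i) (pderiv i).toLinearMap = -LinearMap.id := by
  ext f
  simp

lemma theta_X_pderiv_of_ne {i j : σ} (h : i ≠ j) : θ (X i) (pderiv j).toLinearMap = 0 := by
  ext f
  simp [pderiv_X_of_ne h]

end MvPolynomial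

section PderivChain

variable (k : Type) [CommRing k]

-- `pderivChain k s n = ∂_{s+n} ∘ ⋯ ∘ ∂_{s+1}`
noncomputable def pderivChain : ℕ → ℕ → Module.End k (MvPolynomial ℕ+ k)
  | _, 0 => LinearMap.id
  | s, n + 1 => pderivChain (s + 1) n ∘ₗ (pderiv s.succPNat).toLinearMap

variable {k}

local notation "θ" => theta k (MvPolynomial ℕ+ k) (MvPolynomial ℕ+ k) (MvPolynomial ℕ+ k)

lemma pderivChain_succ' (s n : ℕ) :
    pderivChain k s (n + 1) = (pderiv (n + s).succPNat).toLinearMap ∘ₗ pderivChain k s n := by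
  induction n generalizing s with
  | zero => simp [pderivChain]
  | succ n ih =>
    rw [pderivChain, ih, pderivChain, LinearMap.comp_assoc, Nat.add_right_comm, Nat.add_assoc]

lemma pderivChain_succ_apply_eq_zero {N : ℕ} {f : MvPolynomial ℕ+ k}
    (hf : ∀ j : ℕ+, N < (j : ℕ) → pderiv j f = 0) {s n : ℕ} (h : N ≤ s + n) :
    pderivChain k s (n + 1) f = 0 := by
  induction n generalizing s f with
  | zero => exact hf _ (by simpa using h)
  | succ n ih =>
    rw [pderivChain, LinearMap.comp_apply]
    refine ih (fun j hj => ?_) (by omega)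
    simp [pderiv_pderiv_comm j, hf j hj]

lemma isLocallyFiniteFamily_pderivChain (s : ℕ) :
    IsLocallyFiniteFamily (pderivChain k s) := by
  intro f
  set N := f.vars.sup fun i : ℕ+ => (i : ℕ)
  have hf : ∀ j : ℕ+, N < (j : ℕ) → pderiv j f = 0 := fun j hj =>
    pderiv_eq_zero_of_notMem_vars fun hmem =>
      (Finset.le_sup (f := fun i : ℕ+ => (i : ℕ)) hmem).not_gt hj
  refine (Set.finite_Iic N).subset fun n hn => ?_
  by_contra hnN
  obtain ⟨m, rfl⟩ := Nat.exists_eq_add_of_lt (not_le.1 hnN)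
  exact hn (pderivChain_succ_apply_eq_zero hf (by omega))

lemma theta_X_pderivChain_of_le {i : ℕ+} {s : ℕ} (h : (i : ℕ) ≤ s) (n : ℕ) :
    θ (X i) (pderivChain k s n) = 0 := by
  induction n generalizing s with
  | zero => exact theta_id _
  | succ n ih =>
    have hi : i ≠ s.succPNat := fun hi => by simp [hi] at h
    rw [pderivChain, theta_comp, ih (by omega), theta_X_pderiv_of_ne hi]
    simp

lemma theta_X_pderivChain_succ (s n : ℕ) :
    θ (X s.succPNat) (pderivChain k s (n + 1)) = -pderivChain k (s + 1) n := by
  rw [pderivChain, theta_comp, theta_X_pderivChain_of_le (by simp) n, theta_X_pderiv_self]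
  simp

lemma theta_X_theta_X_pderivChain (i : ℕ+) (s n : ℕ) :
    θ (X i) (θ (X i) (pderivChain k s n)) = 0 := by
  induction n generalizing s with
  | zero => rw [pderivChain, theta_id, theta_zero]
  | succ n ih =>
    by_cases hi : i = s.succPNat
    · rw [hi, theta_X_pderivChain_succ, theta_neg, theta_X_pderivChain_of_le (by simp), neg_zero]
    · rw [pderivChain, theta_comp, theta_X_pderiv_of_ne hi, LinearMap.comp_zero, add_zero,
        theta_comp, ih, theta_X_pderiv_of_ne hi]
      simp

end PderivChain

section DInfty

variable (k : Type) [CommRing k]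

noncomputable def pderivChainSum (s : ℕ) : Module.End k (MvPolynomial ℕ+ k) :=
  locallyFiniteSum (pderivChain k s) (isLocallyFiniteFamily_pderivChain s)

noncomputable def dInfty : Module.End k (MvPolynomial ℕ+ k) :=
  locallyFiniteSum (fun n => pderivChain k 0 (n + 1))
    (isLocallyFiniteFamily_pderivChain 0).comp_succ

variable {k}

local notation "θ" => theta k (MvPolynomial ℕ+ k) (MvPolynomial ℕ+ k) (MvPolynomial ℕ+ k)

lemma theta_X_locallyFiniteSum_pderivChain_succ (s : ℕ) :
    θ (X s.succPNat) (locallyFiniteSum (fun n => pderivChain k s (n + 1))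
      (isLocallyFiniteFamily_pderivChain s).comp_succ) = -pderivChainSum k (s + 1) := by
  rw [theta_locallyFiniteSum]
  refine LinearMap.ext fun f => ?_
  simp only [locallyFiniteSum_apply, theta_X_pderivChain_succ, LinearMap.neg_apply,
    finsum_neg_distrib]
  rfl

lemma theta_X_pderivChainSum (s : ℕ) :
    θ (X s.succPNat) (pderivChainSum k s) = -pderivChainSum k (s + 1) := by
  rw [pderivChainSum, locallyFiniteSum_eq_add, theta_add,
    theta_X_locallyFiniteSum_pderivChain_succ, pderivChain, theta_id, zero_add]

lemma pderivChainSum_apply_one (s : ℕ) : pderivChainSum k s 1 = 1 := by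
  rw [pderivChainSum, locallyFiniteSum_eq_add]
  simp [locallyFiniteSum_apply, pderivChain]

lemma theta_X_theta_X_dInfty (i : ℕ+) : θ (X i) (θ (X i) (dInfty k)) = 0 := by
  rw [dInfty, theta_locallyFiniteSum, theta_locallyFiniteSum]
  refine LinearMap.ext fun f => ?_
  simp [locallyFiniteSum_apply, theta_X_theta_X_pderivChain]

end DInfty

section Field

variable {k : Type} [Field k]

local notation "θ" => theta k (MvPolynomial ℕ+ k) (MvPolynomial ℕ+ k) (MvPolynomial ℕ+ k)

lemma dchain_eq_pderivChain (n : ℕ) (f : MvPolynomial ℕ+ k) :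
    dchain k n f = pderivChain k 0 n f := by
  induction n with
  | zero => rfl
  | succ n ih => rw [pderivChain_succ', LinearMap.comp_apply, ← ih]; rfl

lemma dInfty_apply (f : MvPolynomial ℕ+ k) :
    dInfty k f = ∑ᶠ n, dchain k (n + 1) f := by
  simp [dInfty, locallyFiniteSum_apply, dchain_eq_pderivChain]

lemma tchain_succ (n : ℕ) (e : Module.End k (MvPolynomial ℕ+ k)) :
    tchain k (n + 1) e = θ (X n.succPNat) (tchain k n e) := rfl

lemma tchain_dInfty (n : ℕ) :
    tchain k (n + 1) (dInfty k) = (-1 : k) ^ (n + 1) • pderivChainSum k (n + 1) := by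
  induction n with
  | zero =>
    refine (theta_X_locallyFiniteSum_pderivChain_succ 0).trans (LinearMap.ext fun f => ?_)
    simp
  | succ n ih =>
    rw [tchain_succ, ih, theta_smul, theta_X_pderivChainSum]
    refine LinearMap.ext fun f => ?_
    simp [pow_succ]

lemma tchain_dInfty_ne_zero (n : ℕ) : tchain k (n + 1) (dInfty k) ≠ 0 := by
  intro h
  have h1 := congr($h 1)
  simp [tchain_dInfty, pderivChainSum_apply_one] at h1

end Field

/-- For `R = k[x_1, x_2, x_3, …]`, the operator
`D_∞ = ∂/∂x_1 + ∂²/(∂x_1∂x_2) + ∂³/(∂x_1∂x_2∂x_3) + ⋯` is a well-defined `k`-linear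
map `R → R` with `θ_{x_i}(θ_{x_i}(D_∞)) = 0` for every `i` (so `D_∞` has `x_i`-order
`≤ 1` for every `i`), but `θ_{x_n} ⋯ θ_{x_1}(D_∞) ≠ 0` for every `n ≥ 1`; hence `D_∞`
is an `R`-differential operator that is not a quite `R`-differential operator. -/
theorem stmt14 (k : Type) [Field k] :
    ∃ D : MvPolynomial ℕ+ k →ₗ[k] MvPolynomial ℕ+ k,
      (∀ f : MvPolynomial ℕ+ k, D f = ∑ᶠ n : ℕ, dchain k (n + 1) f) ∧
      (∀ i : ℕ+,
        theta k (MvPolynomial ℕ+ k) (MvPolynomial ℕ+ k) (MvPolynomial ℕ+ k) (X i)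
          (theta k (MvPolynomial ℕ+ k) (MvPolynomial ℕ+ k) (MvPolynomial ℕ+ k) (X i) D)
          = 0) ∧
      (∀ n : ℕ, tchain k (n + 1) D ≠ 0) ∧
      (∀ r : MvPolynomial ℕ+ k, ∃ n : ℕ,
        (fun e =>
          theta k (MvPolynomial ℕ+ k) (MvPolynomial ℕ+ k) (MvPolynomial ℕ+ k) r e)^[n + 1]
          D = 0) ∧
      (∀ β : Ordinal.{0},
        D ∉ opFilt k (MvPolynomial ℕ+ k) (MvPolynomial ℕ+ k) (MvPolynomial ℕ+ k) β) := by
  refine ⟨dInfty k, dInfty_apply, theta_X_theta_X_dInfty, tchain_dInfty_ne_zero, fun r => ?_,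
    fun β => notMem_opFilt_of_theta_chain (e := fun n => tchain k n (dInfty k))
      (fun n => (tchain_succ n _).symm) tchain_dInfty_ne_zero β 0⟩
  obtain ⟨n, hn⟩ := exists_iterate_theta_eq_zero (adjoin_range_X (R := k) (σ := ℕ+))
    (fun _ ⟨i, hi⟩ => ⟨2, hi ▸ theta_X_theta_X_dInfty i⟩) r
  exact ⟨n, by rw [Function.iterate_succ_apply', hn, theta_zero]⟩
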